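/- Let λ be a real number, Δ ≥ 3, and n a positive integer. Let U₁ be a unicyclic graph with n vertices and maximum degree Δ having a vertex a of degree Δ not on the cycle, adjacent to Δ-1 leaves, with a cycle vertex b satisfying d(a,b) = 1 and deg(b) = 3, and all other vertices of degree at most 2. Let U₂ be a unicyclic graph with n vertices and maximum degree Δ having a vertex a' of degree Δ not on the cycle, adjacent to Δ-1 leaves, whose nearest cycle vertex b' satisfies d(a',b') ≥ 2 and deg(b') = 3, and all other vertices of degree at most 2. Then GRM_λ(U₁) − GRM_λ(U₂) = Δ − 2 > 0; in particular GRM_λ(U₁) > GRM_λ(U₂). -/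

import Mathlib

open SimpleGraph

/-- Degree of a vertex (classical decidability). -/
noncomputable def deg {V : Type*} [Fintype V] (G : SimpleGraph V) (v : V) : ℕ :=
  letI := Classical.decEq V
  letI : DecidableRel G.Adj := Classical.decRel _
  G.degree v

/-- Maximum degree of a graph (classical decidability). -/
noncomputable def maxDeg {V : Type*} [Fintype V] (G : SimpleGraph V) : ℕ :=
  letI := Classical.decEq V
  letI : DecidableRel G.Adj := Classical.decRel _
  G.maxDegree

/-- The general reduced second Zagreb index
`GRM_λ(G) = Σ_{ab ∈ E(G)} (deg a + λ)(deg b + λ)`. -/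
noncomputable def GRM {V : Type*} [Fintype V] (l : ℝ) (G : SimpleGraph V) : ℝ :=
  letI := Classical.decEq V
  letI : DecidableRel G.Adj := Classical.decRel _
  ∑ e ∈ G.edgeFinset,
    Sym2.lift ⟨fun a b => ((G.degree a : ℝ) + l) * ((G.degree b : ℝ) + l),
      fun a b => by ring⟩ e

/-- A unicyclic graph: connected with exactly as many edges as vertices. -/
def IsUnicyclic {V : Type*} [Fintype V] (G : SimpleGraph V) : Prop :=
  G.Connected ∧ G.edgeSet.ncard = Fintype.card V

/-- A vertex lies on a cycle of `G`. -/
def OnCycle {V : Type*} (G : SimpleGraph V) (v : V) : Prop :=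
  ∃ (u : V) (w : G.Walk u u), w.IsCycle ∧ v ∈ w.support


/-! By the handshake lemma, `n` edges on `n` vertices force every vertex other than `a`, `b`
and the `Δ - 1` leaves at `a` to have degree exactly 2. Hence all edge weights
`(deg x + λ)(deg y + λ)` are known: besides the `Δ - 1` leaf edges, `U₁` has the edge `ab` of
weight `(Δ + λ)(3 + λ)`, two more edges at `b` of weight `(3 + λ)(2 + λ)` and `n - Δ - 2` edges of
weight `(2 + λ)²`, while in `U₂` the non-leaf edge at `a'` weighs `(Δ + λ)(2 + λ)`, there are three
edges at `b'` and `n - Δ - 3` edges of weight `(2 + λ)²`. The difference is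
`(Δ + λ) - (3 + λ)(2 + λ) + (2 + λ)² = Δ - 2`. -/

open Finset

namespace SimpleGraph

variable {V : Type*} [Fintype V] (G : SimpleGraph V) [DecidableRel G.Adj]

lemma deg_eq_degree (v : V) : deg G v = G.degree v := by
  unfold deg
  congr!

def zagrebWeight (l : ℝ) : Sym2 V → ℝ :=
  Sym2.lift ⟨fun x y => ((G.degree x : ℝ) + l) * (G.degree y + l), fun _ _ => mul_comm _ _⟩

@[simp]
lemma zagrebWeight_mk (l : ℝ) (x y : V) :
    G.zagrebWeight l s(x, y) = ((G.degree x : ℝ) + l) * (G.degree y + l) :=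
  rfl

lemma GRM_eq_sum_zagrebWeight (l : ℝ) :
    GRM l G = ∑ e ∈ G.edgeFinset, G.zagrebWeight l e := by
  unfold GRM zagrebWeight
  congr!

def pendantLeaves (a : V) : Finset V :=
  {v ∈ G.neighborFinset a | G.degree v = 1}

variable {G}

lemma notMem_pendantLeaves_self (a : V) : a ∉ G.pendantLeaves a := by
  simp [pendantLeaves]

lemma eq_of_adj_of_mem_pendantLeaves {a u v : V} (hv : v ∈ G.pendantLeaves a) (huv : G.Adj u v) :
    u = a := by
  simp only [pendantLeaves, mem_filter, mem_neighborFinset] at hv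
  obtain ⟨w, -, hw⟩ := degree_eq_one_iff_existsUnique_adj.mp hv.2
  exact (hw u huv.symm).trans (hw a hv.1.symm).symm

structure HasPendantStar (G : SimpleGraph V) [DecidableRel G.Adj] (k : ℕ) (a b : V) : Prop where
  card_edgeFinset : #G.edgeFinset = Fintype.card V
  ne : a ≠ b
  degree_center : G.degree a = k + 1
  degree_branch : G.degree b = 3
  card_pendantLeaves : #(G.pendantLeaves a) = k
  degree_le_two : ∀ c, c ≠ a → c ≠ b → G.degree c ≤ 2

lemma IsUnicyclic.card_edgeFinset (hG : IsUnicyclic G) : #G.edgeFinset = Fintype.card V := by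
  rw [← hG.2, ← coe_edgeFinset, Set.ncard_coe_finset]

lemma ncard_setOf_adj_deg_eq_one (a : V) :
    {v | G.Adj a v ∧ deg G v = 1}.ncard = #(G.pendantLeaves a) := by
  rw [← Set.ncard_coe_finset]
  congr
  ext
  simp [pendantLeaves, deg_eq_degree]

lemma IsUnicyclic.hasPendantStar (hG : IsUnicyclic G) {k : ℕ} {a b : V} (hab : a ≠ b)
    (ha : deg G a = k + 1) (hb : deg G b = 3) (hleaves : {v | G.Adj a v ∧ deg G v = 1}.ncard = k)
    (hother : ∀ c, c ≠ a → c ≠ b → deg G c ≤ 2) : G.HasPendantStar k a b where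
  card_edgeFinset := hG.card_edgeFinset
  ne := hab
  degree_center := deg_eq_degree G a ▸ ha
  degree_branch := deg_eq_degree G b ▸ hb
  card_pendantLeaves := ncard_setOf_adj_deg_eq_one (G := G) a ▸ hleaves
  degree_le_two c hca hcb := deg_eq_degree G c ▸ hother c hca hcb

lemma HasPendantStar.notMem_pendantLeaves_branch {k : ℕ} {a b : V} (h : G.HasPendantStar k a b) :
    b ∉ G.pendantLeaves a := by
  simp [pendantLeaves, h.degree_branch]

variable [DecidableEq V]

lemma sum_edgeFinset_eq_of_ne {M : Type*} [AddCommMonoid M] (f : Sym2 V → M) {a b : V}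
    (hab : a ≠ b) :
    ∑ e ∈ G.edgeFinset, f e = ∑ u ∈ G.neighborFinset a, f s(a, u)
      + ∑ u ∈ (G.neighborFinset b).erase a, f s(b, u)
      + ∑ e ∈ G.edgeFinset with a ∉ e ∧ b ∉ e, f e := by
  have hinj (v : V) : Set.InjOn (s(v, ·)) ↑(G.neighborFinset v) :=
    fun _ _ _ _ h => Sym2.congr_right.mp h
  have ha : {e ∈ G.edgeFinset | a ∈ e} = (G.neighborFinset a).image (s(a, ·)) := by
    ext ⟨x, y⟩
    simp only [mem_filter, mem_edgeFinset, mem_edgeSet, Sym2.mem_iff, mem_image,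
      mem_neighborFinset, Sym2.eq_iff]
    aesop (add safe Adj.symm)
  have hb : {e ∈ G.edgeFinset | a ∉ e ∧ b ∈ e}
      = ((G.neighborFinset b).erase a).image (s(b, ·)) := by
    ext ⟨x, y⟩
    simp only [mem_filter, mem_edgeFinset, mem_edgeSet, Sym2.mem_iff, mem_image, mem_erase,
      mem_neighborFinset, Sym2.eq_iff]
    aesop (add safe Adj.symm)
  rw [← sum_filter_add_sum_filter_not G.edgeFinset (a ∈ ·),
    ← sum_filter_add_sum_filter_not {e ∈ G.edgeFinset | a ∉ e} (b ∈ ·), add_assoc,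
    filter_filter, filter_filter, ha, hb, sum_image (hinj a),
    sum_image ((hinj b).mono (erase_subset _ _))]

namespace HasPendantStar

variable {k : ℕ} {a b : V} (h : G.HasPendantStar k a b)
include h

lemma degree_eq_two {v : V} (hva : v ≠ a) (hvb : v ≠ b) (hvL : v ∉ G.pendantLeaves a) :
    G.degree v = 2 := by
  set T := insert a (insert b (G.pendantLeaves a))
  have hbL := h.notMem_pendantLeaves_branch
  have haT : a ∉ insert b (G.pendantLeaves a) := by
    simp [h.ne, notMem_pendantLeaves_self]
  have hsumL : ∑ v ∈ G.pendantLeaves a, G.degree v = k := by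
    rw [← h.card_pendantLeaves, card_eq_sum_ones]
    exact sum_congr rfl fun v hv => (mem_filter.mp hv).2
  have hsumT : ∑ v ∈ T, G.degree v = ∑ v ∈ T, 2 := by
    rw [sum_insert haT, sum_insert hbL, hsumL, h.degree_center, h.degree_branch, sum_const,
      card_insert_of_notMem haT, card_insert_of_notMem hbL, h.card_pendantLeaves, smul_eq_mul]
    ring
  have hsum : ∑ v, G.degree v = ∑ v : V, 2 := by
    rw [sum_degrees_eq_twice_card_edges, h.card_edgeFinset, sum_const, card_univ, smul_eq_mul,
      mul_comm]
  -- the degrees on `T` already sum to `2 * #T`, as do all degrees over `univ`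
  have hrest : ∑ v ∈ univ \ T, G.degree v = ∑ v ∈ univ \ T, 2 := by
    have := sum_sdiff (f := fun v => G.degree v) (subset_univ T)
    have := sum_sdiff (f := fun _ => 2) (subset_univ T)
    omega
  have hle : ∀ c ∈ univ \ T, G.degree c ≤ 2 := by
    intro c hc
    simp only [T, mem_sdiff, mem_univ, mem_insert, true_and, not_or] at hc
    exact h.degree_le_two c hc.1 hc.2.1
  exact (sum_eq_sum_iff_of_le hle).mp hrest v (by simp [T, hva, hvb, hvL])

lemma degree_eq_two_of_adj_branch {u : V} (hbu : G.Adj b u) (hua : u ≠ a) : G.degree u = 2 :=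
  h.degree_eq_two hua hbu.ne' fun huL => h.ne (eq_of_adj_of_mem_pendantLeaves huL hbu).symm

lemma exists_neighborFinset_eq_insert :
    ∃ v, G.Adj a v ∧ v ∉ G.pendantLeaves a ∧
      G.neighborFinset a = insert v (G.pendantLeaves a) := by
  have hsub : G.pendantLeaves a ⊆ G.neighborFinset a := filter_subset _ _
  have hcard : #(G.neighborFinset a) = #(G.pendantLeaves a) + 1 := by
    rw [card_neighborFinset_eq_degree, h.degree_center, h.card_pendantLeaves]
  obtain ⟨v, hv, hvL⟩ :=
    exists_mem_notMem_of_card_lt_card (s := G.pendantLeaves a) (t := G.neighborFinset a) (by omega)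
  refine ⟨v, (mem_neighborFinset _ _ _).mp hv, hvL, (eq_of_subset_of_card_le ?_ ?_).symm⟩
  · exact insert_subset hv hsub
  · rw [card_insert_of_notMem hvL, hcard]

lemma sum_zagrebWeight_center (l : ℝ) {v : V} (hvL : v ∉ G.pendantLeaves a)
    (hN : G.neighborFinset a = insert v (G.pendantLeaves a)) :
    ∑ u ∈ G.neighborFinset a, G.zagrebWeight l s(a, u)
      = k * ((k + 1 + l) * (1 + l)) + (k + 1 + l) * (G.degree v + l) := by
  have hleaf : ∀ u ∈ G.pendantLeaves a, G.zagrebWeight l s(a, u) = (k + 1 + l) * (1 + l) := by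
    intro u hu
    simp [(mem_filter.mp hu).2, h.degree_center]
  rw [hN, sum_insert hvL, sum_congr rfl hleaf, sum_const, h.card_pendantLeaves, nsmul_eq_mul,
    zagrebWeight_mk, h.degree_center]
  push_cast
  ring

lemma sum_zagrebWeight_branch (l : ℝ) :
    ∑ u ∈ (G.neighborFinset b).erase a, G.zagrebWeight l s(b, u)
      = #((G.neighborFinset b).erase a) * ((3 + l) * (2 + l)) := by
  rw [← nsmul_eq_mul, ← sum_const]
  refine sum_congr rfl fun u hu => ?_
  obtain ⟨hua, hbu⟩ := mem_erase.mp hu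
  rw [zagrebWeight_mk, h.degree_branch,
    h.degree_eq_two_of_adj_branch ((mem_neighborFinset _ _ _).mp hbu) hua]
  push_cast
  rfl

lemma sum_zagrebWeight_away (l : ℝ) :
    ∑ e ∈ G.edgeFinset with a ∉ e ∧ b ∉ e, G.zagrebWeight l e
      = #{e ∈ G.edgeFinset | a ∉ e ∧ b ∉ e} * (2 + l) ^ 2 := by
  rw [← nsmul_eq_mul, ← sum_const]
  refine sum_congr rfl fun e he => ?_
  induction e using Sym2.ind with | h x y => ?_
  simp only [mem_filter, mem_edgeFinset, mem_edgeSet, Sym2.mem_iff, not_or] at he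
  obtain ⟨hxy, ⟨hax, hay⟩, hbx, hby⟩ := he
  have hx := h.degree_eq_two (Ne.symm hax) (Ne.symm hbx)
    fun hxL => hay (eq_of_adj_of_mem_pendantLeaves hxL hxy.symm).symm
  have hy := h.degree_eq_two (Ne.symm hay) (Ne.symm hby)
    fun hyL => hax (eq_of_adj_of_mem_pendantLeaves hyL hxy).symm
  rw [zagrebWeight_mk, hx, hy]
  push_cast
  ring

lemma card_filter_edgeFinset_away :
    #{e ∈ G.edgeFinset | a ∉ e ∧ b ∉ e} + #((G.neighborFinset b).erase a) + (k + 1)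
      = Fintype.card V := by
  have := sum_edgeFinset_eq_of_ne (G := G) (fun _ => 1) h.ne
  simp only [← card_eq_sum_ones, card_neighborFinset_eq_degree, h.degree_center] at this
  rw [← h.card_edgeFinset, this]
  ring

lemma GRM_eq (l : ℝ) {v : V} (hvL : v ∉ G.pendantLeaves a)
    (hN : G.neighborFinset a = insert v (G.pendantLeaves a)) :
    GRM l G = k * ((k + 1 + l) * (1 + l)) + (k + 1 + l) * (G.degree v + l)
      + #((G.neighborFinset b).erase a) * ((3 + l) * (2 + l))
      + (Fintype.card V - (k + 1) - #((G.neighborFinset b).erase a) : ℝ) * (2 + l) ^ 2 := by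
  have hcard := congrArg (Nat.cast (R := ℝ)) h.card_filter_edgeFinset_away
  push_cast at hcard
  rw [GRM_eq_sum_zagrebWeight, sum_edgeFinset_eq_of_ne _ h.ne,
    h.sum_zagrebWeight_center l hvL hN, h.sum_zagrebWeight_branch, h.sum_zagrebWeight_away,
    ← hcard]
  ring

lemma GRM_eq_of_adj (l : ℝ) (hab : G.Adj a b) :
    GRM l G = k * ((k + 1 + l) * (1 + l)) + (k + 1 + l) * (3 + l) + 2 * ((3 + l) * (2 + l))
      + (Fintype.card V - k - 3 : ℝ) * (2 + l) ^ 2 := by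
  obtain ⟨v, -, hvL, hN⟩ := h.exists_neighborFinset_eq_insert
  have hvb : b = v := by
    have hb : b ∈ insert v (G.pendantLeaves a) := hN ▸ (mem_neighborFinset _ _ _).mpr hab
    exact (mem_insert.mp hb).resolve_right h.notMem_pendantLeaves_branch
  have hcard : #((G.neighborFinset b).erase a) = 2 := by
    rw [card_erase_of_mem ((mem_neighborFinset _ _ _).mpr hab.symm),
      card_neighborFinset_eq_degree, h.degree_branch]
  rw [h.GRM_eq l hvL hN, ← hvb, h.degree_branch, hcard]
  push_cast
  ring

lemma GRM_eq_of_not_adj (l : ℝ) (hab : ¬G.Adj a b) :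
    GRM l G = k * ((k + 1 + l) * (1 + l)) + (k + 1 + l) * (2 + l) + 3 * ((3 + l) * (2 + l))
      + (Fintype.card V - k - 4 : ℝ) * (2 + l) ^ 2 := by
  obtain ⟨v, hav, hvL, hN⟩ := h.exists_neighborFinset_eq_insert
  have hv : G.degree v = 2 := h.degree_eq_two hav.ne' (by rintro rfl; exact hab hav) hvL
  have hcard : #((G.neighborFinset b).erase a) = 3 := by
    rw [erase_eq_of_notMem fun ha => hab ((mem_neighborFinset _ _ _).mp ha).symm,
      card_neighborFinset_eq_degree, h.degree_branch]
  rw [h.GRM_eq l hvL hN, hv, hcard]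
  push_cast
  ring

end HasPendantStar

end SimpleGraph

theorem stmt15_general {V₁ V₂ : Type*} [Fintype V₁] [Fintype V₂]
    (l : ℝ) (n Δ : ℕ) (hΔ3 : 3 ≤ Δ)
    (U₁ : SimpleGraph V₁) (hU₁ : IsUnicyclic U₁)
    (hcard₁ : Fintype.card V₁ = n)
    (a : V₁) (ha : deg U₁ a = Δ)
    (hleaves₁ : {v : V₁ | U₁.Adj a v ∧ deg U₁ v = 1}.ncard = Δ - 1)
    (b : V₁) (hdist₁ : U₁.dist a b = 1)
    (hdegb : deg U₁ b = 3)
    (hother₁ : ∀ c : V₁, c ≠ a → c ≠ b → deg U₁ c ≤ 2)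
    (U₂ : SimpleGraph V₂) (hU₂ : IsUnicyclic U₂)
    (hcard₂ : Fintype.card V₂ = n)
    (a' : V₂) (ha' : deg U₂ a' = Δ)
    (hleaves₂ : {v : V₂ | U₂.Adj a' v ∧ deg U₂ v = 1}.ncard = Δ - 1)
    (b' : V₂)
    (hdist₂ : 2 ≤ U₂.dist a' b') (hdegb' : deg U₂ b' = 3)
    (hother₂ : ∀ c : V₂, c ≠ a' → c ≠ b' → deg U₂ c ≤ 2) :
    GRM l U₁ - GRM l U₂ = (Δ : ℝ) - 2 ∧ (0 : ℝ) < (Δ : ℝ) - 2 ∧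
      GRM l U₂ < GRM l U₁ := by
  classical
  obtain ⟨k, rfl⟩ : ∃ k, Δ = k + 1 := ⟨Δ - 1, by omega⟩
  rw [Nat.add_sub_cancel] at hleaves₁ hleaves₂
  have hadj₁ : U₁.Adj a b := dist_eq_one_iff_adj.mp hdist₁
  have hnadj₂ : ¬U₂.Adj a' b' := fun h => by rw [dist_eq_one_iff_adj.mpr h] at hdist₂; omega
  have hne₂ : a' ≠ b' := by rintro rfl; rw [dist_self] at hdist₂; omega
  have hdiff : GRM l U₁ - GRM l U₂ = ((k + 1 : ℕ) : ℝ) - 2 := by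
    rw [(hU₁.hasPendantStar hadj₁.ne ha hdegb hleaves₁ hother₁).GRM_eq_of_adj l hadj₁,
      (hU₂.hasPendantStar hne₂ ha' hdegb' hleaves₂ hother₂).GRM_eq_of_not_adj l hnadj₂,
      hcard₁, hcard₂]
    push_cast
    ring
  have hpos : (0 : ℝ) < ((k + 1 : ℕ) : ℝ) - 2 := by
    have : (3 : ℝ) ≤ ((k + 1 : ℕ) : ℝ) := by exact_mod_cast hΔ3
    linarith
  exact ⟨hdiff, hpos, by linarith⟩

theorem stmt15 {V₁ V₂ : Type*} [Fintype V₁] [Fintype V₂]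
    (l : ℝ) (n Δ : ℕ) (hΔ3 : 3 ≤ Δ) (hn : 0 < n)
    (U₁ : SimpleGraph V₁) (hU₁ : IsUnicyclic U₁)
    (hcard₁ : Fintype.card V₁ = n) (hmax₁ : maxDeg U₁ = Δ)
    (a : V₁) (ha : deg U₁ a = Δ) (hacyc : ¬ OnCycle U₁ a)
    (hleaves₁ : {v : V₁ | U₁.Adj a v ∧ deg U₁ v = 1}.ncard = Δ - 1)
    (b : V₁) (hbcyc : OnCycle U₁ b) (hdist₁ : U₁.dist a b = 1)
    (hdegb : deg U₁ b = 3)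
    (hother₁ : ∀ c : V₁, c ≠ a → c ≠ b → deg U₁ c ≤ 2)
    (U₂ : SimpleGraph V₂) (hU₂ : IsUnicyclic U₂)
    (hcard₂ : Fintype.card V₂ = n) (hmax₂ : maxDeg U₂ = Δ)
    (a' : V₂) (ha' : deg U₂ a' = Δ) (hacyc' : ¬ OnCycle U₂ a')
    (hleaves₂ : {v : V₂ | U₂.Adj a' v ∧ deg U₂ v = 1}.ncard = Δ - 1)
    (b' : V₂) (hbcyc' : OnCycle U₂ b')
    (hmin' : ∀ c : V₂, OnCycle U₂ c → U₂.dist a' b' ≤ U₂.dist a' c)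
    (hdist₂ : 2 ≤ U₂.dist a' b') (hdegb' : deg U₂ b' = 3)
    (hother₂ : ∀ c : V₂, c ≠ a' → c ≠ b' → deg U₂ c ≤ 2) :
    GRM l U₁ - GRM l U₂ = (Δ : ℝ) - 2 ∧ (0 : ℝ) < (Δ : ℝ) - 2 ∧
      GRM l U₂ < GRM l U₁ :=
  stmt15_general l n Δ hΔ3 U₁ hU₁ hcard₁ a ha hleaves₁ b hdist₁ hdegb hother₁ U₂ hU₂ hcard₂ a' ha'
    hleaves₂ b' hdist₂ hdegb' hother₂
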